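/- Let κ and κ' be cardinals with κ infinite and κ ≥ 2^{κ'}. Then any functor from the category of nonempty sets of cardinality at most κ to the category of nonempty sets of cardinality at most κ' is isomorphic to a constant functor. -/

import Mathlib

open CategoryTheory Cardinal Function

universe u

/-!
Let `#K = κ` and `W = K × K`. For `S : Set K` let `j_S : W → W ⊕ W` send `(x, y)` to the left
summand iff `y ∈ S`. These are `2 ^ κ` morphisms, while there are at most `κ' ^ κ' ≤ κ` morphisms
`F W ⟶ F (W ⊕ W)`, so `F j_S = F j_T` for some `S ≠ T`. As `j_S` and `j_T` differ on a copy
`K × {y}` of `W`, there are `φ` and `ψ` with `φ ≫ j_S ≫ ψ = inl` and `φ ≫ j_T ≫ ψ = inr`, hence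
`F inl = F inr`. Every object is a retract of `W`, and parallel maps `f, g : X ⟶ Y` factor as
`X ⟶ W ⟶ W ⊕ W ⟶ Y` through `inl` resp. `inr`, so `F` identifies all parallel morphisms. Since
all hom-sets are nonempty, `F` is then isomorphic to a constant functor.
-/

namespace CategoryTheory.Functor

variable {C D : Type*} [Category C] [Category D]

theorem map_eq_of_map_inl_eq_map_inr (F : C ⥤ D) {W S : C} (inl inr : W ⟶ S)
    (hS : ∀ {Y : C} (f g : W ⟶ Y), ∃ h : S ⟶ Y, inl ≫ h = f ∧ inr ≫ h = g)
    (hW : ∀ X : C, Nonempty (Retract X W)) (hF : F.map inl = F.map inr)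
    {X Y : C} (f g : X ⟶ Y) : F.map f = F.map g := by
  obtain ⟨R⟩ := hW X
  obtain ⟨h, hf, hg⟩ := hS (R.r ≫ f) (R.r ≫ g)
  calc F.map f = F.map (R.i ≫ inl ≫ h) := by rw [hf, R.retract_assoc]
    _ = F.map (R.i ≫ inr ≫ h) := by simp only [map_comp, hF]
    _ = F.map g := by rw [hg, R.retract_assoc]

theorem nonempty_iso_const_of_map_eq (F : C ⥤ D)
    (hF : ∀ ⦃X Y : C⦄ (f g : X ⟶ Y), F.map f = F.map g) (hC : ∀ X Y : C, Nonempty (X ⟶ Y))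
    (P : C) : Nonempty (F ≅ (const C).obj (F.obj P)) :=
  ⟨NatIso.ofComponents (fun X =>
    { hom := F.map (hC X P).some
      inv := F.map (hC P X).some
      hom_inv_id := by rw [← F.map_comp, hF _ (𝟙 X), F.map_id]
      inv_hom_id := by rw [← F.map_comp, hF _ (𝟙 P), F.map_id]; rfl })
    fun f => by
      rw [← F.map_comp, const_obj_map]
      exact (hF _ _).trans (Category.comp_id _).symm⟩

end CategoryTheory.Functor

theorem Cardinal.power_self_le_of_two_power_le {κ κ' : Cardinal.{u}} (hκ : ℵ₀ ≤ κ)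
    (h : 2 ^ κ' ≤ κ) : κ' ^ κ' ≤ κ := by
  rcases lt_or_ge κ' ℵ₀ with hfin | hinf
  · exact (power_lt_aleph0 hfin hfin).le.trans hκ
  · exact (power_self_eq hinf).trans_le h

section SumOfProd

variable {α β : Type*}

noncomputable def splitBySnd (S : Set β) (p : α × β) : (α × β) ⊕ (α × β) :=
  open Classical in if p.2 ∈ S then .inl p else .inr p

theorem leftInverse_elim_id_splitBySnd (S : Set β) :
    LeftInverse (Sum.elim id id) (splitBySnd (α := α) S) := fun p => by
  unfold splitBySnd; split_ifs <;> rfl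

theorem exists_injective_splitBySnd_ne {S T : Set β} (hST : S ≠ T) (e : α × β ↪ α) :
    ∃ φ : α × β → α × β, Injective φ ∧ ∀ w, splitBySnd S (φ w) ≠ splitBySnd T (φ w) := by
  obtain ⟨y, hy⟩ : ∃ y, ¬ (y ∈ S ↔ y ∈ T) := by
    by_contra! h
    exact hST (Set.ext h)
  refine ⟨fun w => (e w, y), fun w w' h => e.injective (congrArg Prod.fst h), fun w => ?_⟩
  unfold splitBySnd
  split_ifs <;> simp_all

end SumOfProd

theorem exists_comp_eq_inl_comp_eq_inr {W A : Type*} [Nonempty W] {a b : W → A} {r : A → W}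
    (ha : LeftInverse r a) (hb : LeftInverse r b) {φ : W → W} (hφ : Injective φ)
    (hab : ∀ w, a (φ w) ≠ b (φ w)) :
    ∃ ψ : A → W ⊕ W, ψ ∘ a ∘ φ = Sum.inl ∧ ψ ∘ b ∘ φ = Sum.inr := by
  classical
  refine ⟨fun x => if x = a (r x) then .inl (invFun φ (r x)) else .inr (invFun φ (r x)),
    funext fun w => ?_, funext fun w => ?_⟩
  · simp [ha (φ w), leftInverse_invFun hφ w]
  · simp [hb (φ w), leftInverse_invFun hφ w, (hab w).symm]

abbrev NonemptySetsLE (κ : Cardinal.{u}) : Type (u + 1) :=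
  ObjectProperty.FullSubcategory fun X : Type u => Nonempty X ∧ #X ≤ κ

namespace NonemptySetsLE

variable {κ : Cardinal.{u}}

instance (X : NonemptySetsLE κ) : Nonempty X.obj := X.property.1

abbrev of (α : Type u) [Nonempty α] (h : #α ≤ κ) : NonemptySetsLE κ := ⟨α, ‹_›, h⟩

abbrev homMk {X Y : NonemptySetsLE κ} (f : X.obj → Y.obj) : X ⟶ Y :=
  ObjectProperty.homMk (TypeCat.ofHom f)

instance (X Y : NonemptySetsLE κ) : Nonempty (X ⟶ Y) := ⟨homMk fun _ => Classical.arbitrary _⟩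

theorem nonempty_retract {X W : NonemptySetsLE κ} (h : #X.obj ≤ #W.obj) :
    Nonempty (Retract X W) := by
  obtain ⟨e⟩ := (le_def _ _).mp h
  exact ⟨homMk e, homMk (invFun e), by
    ext x
    exact leftInverse_invFun e.injective x⟩

theorem mk_hom_le (X Y : NonemptySetsLE κ) : #(X ⟶ Y) ≤ κ ^ κ := calc
  #(X ⟶ Y) ≤ #(X.obj → Y.obj) :=
    mk_le_of_injective (f := fun f x => f.hom x) fun f g h => by ext x; exact congrFun h x
  _ = #Y.obj ^ #X.obj := (power_def _ _).symm
  _ ≤ κ ^ κ := (power_le_power_left (mk_ne_zero _) X.property.2).trans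
    (power_le_power_right Y.property.2)

variable (K : Type u) [Infinite K]

abbrev square : NonemptySetsLE #K := of (K × K) (by simp)

abbrev squareSum : NonemptySetsLE #K := of ((K × K) ⊕ (K × K)) (by simp)

abbrev inl : square K ⟶ squareSum K := homMk Sum.inl

abbrev inr : square K ⟶ squareSum K := homMk Sum.inr

theorem map_inl_eq_map_inr {κ' : Cardinal.{u}} (h : 2 ^ κ' ≤ #K)
    (F : NonemptySetsLE #K ⥤ NonemptySetsLE κ') :
    F.map (inl K) = F.map (inr K) := by
  let j : Set K → (square K ⟶ squareSum K) := fun S => homMk (splitBySnd S)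
  obtain ⟨S, T, hST, hne⟩ : ∃ S T, F.map (j S) = F.map (j T) ∧ S ≠ T := by
    refine not_injective_iff.mp fun hinj => (mk_le_of_injective hinj).not_gt ?_
    calc #(F.obj (square K) ⟶ F.obj (squareSum K)) ≤ κ' ^ κ' := mk_hom_le _ _
      _ ≤ #K := power_self_le_of_two_power_le (infinite_iff.mp ‹_›) h
      _ < #(Set K) := by rw [mk_set]; exact cantor _
  obtain ⟨φ, hφ, hφne⟩ :=
    exists_injective_splitBySnd_ne hne ((le_def (K × K) K).mp (by simp)).some
  obtain ⟨ψ, hψS, hψT⟩ := exists_comp_eq_inl_comp_eq_inr (leftInverse_elim_id_splitBySnd S)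
    (leftInverse_elim_id_splitBySnd T) hφ hφne
  calc F.map (inl K) = F.map (homMk φ ≫ j S ≫ homMk ψ) :=
        congrArg (fun g => F.map (homMk g)) hψS.symm
    _ = F.map (homMk φ ≫ j T ≫ homMk ψ) := by simp only [Functor.map_comp, hST]
    _ = F.map (inr K) := congrArg (fun g => F.map (homMk g)) hψT

end NonemptySetsLE

theorem stmt_7 (κ κ' : Cardinal.{u}) (hκ : Cardinal.aleph0 ≤ κ) (h : 2 ^ κ' ≤ κ)
    (F : ObjectProperty.FullSubcategory (fun X : Type u => Nonempty X ∧ Cardinal.mk X ≤ κ) ⥤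
         ObjectProperty.FullSubcategory (fun X : Type u => Nonempty X ∧ Cardinal.mk X ≤ κ')) :
    ∃ d, Nonempty (F ≅
      (Functor.const (ObjectProperty.FullSubcategory (fun X : Type u => Nonempty X ∧ Cardinal.mk X ≤ κ))).obj d) := by
  obtain ⟨K, rfl⟩ : ∃ K : Type u, #K = κ := ⟨κ.out, mk_out κ⟩
  have : Infinite K := infinite_iff.mpr hκ
  have hF : ∀ ⦃X Y : NonemptySetsLE #K⦄ (f g : X ⟶ Y), F.map f = F.map g := fun _ _ =>
    F.map_eq_of_map_inl_eq_map_inr (NonemptySetsLE.inl K) (NonemptySetsLE.inr K)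
      (fun f g => ⟨NonemptySetsLE.homMk (Sum.elim f.hom g.hom), rfl, rfl⟩)
      (fun X => NonemptySetsLE.nonempty_retract (by simpa using X.property.2))
      (NonemptySetsLE.map_inl_eq_map_inr K h F)
  exact ⟨_, F.nonempty_iso_const_of_map_eq hF (fun _ _ => inferInstance) (NonemptySetsLE.square K)⟩
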